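/- arXiv:2001.08923 — 4 statements merged into one kernel-verified Lean document; each statement's English description precedes it below -/
import Mathlib

section
/- Let q > 1 be an integer and t > 0 a rational number such that q(q-1)t is an integer. Then the n-th digit t^(n) of t in base q is nonzero and takes the same value for all integers n ≥ 2. -/
/-!
Put `d = q - 1` and `z = q d t ∈ ℤ`, so that `t q^(m+1) = z q^m / d`. For an integer `a`,
`⌈a / d - 1⌉ = ⌊(a - 1) / d⌋`, and `z q^m - 1 ≡ z - 1 [ZMOD d]` because `q ≡ 1 [ZMOD d]`. Hence
`d ⌈t q^(m+1) - 1⌉ = z q^m - r` with `r = (z - 1) % d + 1 ∈ [1, d]` independent of `m`, and the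
digit telescopes to `((z q^(m+1) - r) - q (z q^m - r)) / d = r`.
-/

def baseDigit (q : ℤ) (t : ℚ) (n : ℤ) : ℤ :=
  ⌈t * (q : ℚ) ^ n - 1⌉ - q * ⌈t * (q : ℚ) ^ (n - 1) - 1⌉

theorem Int.ceil_intCast_div_sub_one {α : Type*} [Field α] [LinearOrder α]
    [IsStrictOrderedRing α] [FloorRing α] (a : ℤ) {d : ℤ} (hd : 0 < d) :
    ⌈(a : α) / d - 1⌉ = (a - 1) / d := by
  have hdα : (0 : α) < d := by exact_mod_cast hd
  have hr₀ : 0 ≤ (a - 1) % d := Int.emod_nonneg _ hd.ne'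
  have hr₁ : (a - 1) % d < d := Int.emod_lt_of_pos _ hd
  have hdecomp : (a : α) = d * ((a - 1) / d : ℤ) + ((a - 1) % d + 1 : ℤ) := by
    have := Int.mul_ediv_add_emod (a - 1) d
    exact_mod_cast (by omega : a = d * ((a - 1) / d) + ((a - 1) % d + 1))
  have hfrac_pos : (0 : α) < ((a - 1) % d + 1 : ℤ) / d :=
    div_pos (by exact_mod_cast (by omega)) hdα
  have hfrac_le : (((a - 1) % d + 1 : ℤ) : α) / d ≤ 1 :=
    (div_le_one hdα).2 (by exact_mod_cast (by omega))
  rw [Int.ceil_eq_iff, hdecomp, add_div, mul_div_cancel_left₀ _ hdα.ne']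
  constructor <;> linarith

theorem Int.mul_pow_modEq_self (z q : ℤ) (m : ℕ) : z * q ^ m ≡ z [ZMOD q - 1] := by
  simpa using ((Int.modEq_sub q 1).pow m).mul_left z

theorem ceil_mul_pow_succ_sub_one {q z : ℤ} (hq : 1 < q) {t : ℚ} (hz : q * (q - 1) * t = z)
    (m : ℕ) : ⌈t * (q : ℚ) ^ (m + 1) - 1⌉ = (z * q ^ m - 1) / (q - 1) := by
  have hd : (q : ℚ) - 1 ≠ 0 := sub_ne_zero.2 (by exact_mod_cast hq.ne')
  have hval : t * (q : ℚ) ^ (m + 1) = ((z * q ^ m : ℤ) : ℚ) / ((q - 1 : ℤ) : ℚ) := by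
    rw [eq_div_iff (by exact_mod_cast hd), Int.cast_mul, ← hz]
    push_cast
    ring
  rw [hval, Int.ceil_intCast_div_sub_one _ (by omega)]

theorem baseDigit_natCast_add_two {q z : ℤ} (hq : 1 < q) {t : ℚ} (hz : q * (q - 1) * t = z)
    (m : ℕ) : baseDigit q t (m + 2) = (z - 1) % (q - 1) + 1 := by
  have hd : q - 1 ≠ 0 := by omega
  have hrem : ∀ k : ℕ, (z * q ^ k - 1) % (q - 1) = (z - 1) % (q - 1) :=
    fun k => (Int.mul_pow_modEq_self z q k).sub_right 1
  have hmul : ∀ k : ℕ,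
      (q - 1) * ((z * q ^ k - 1) / (q - 1)) = z * q ^ k - 1 - (z - 1) % (q - 1) := by
    intro k
    rw [Int.mul_ediv_self, hrem]
  have hexp : (m : ℤ) + 2 = ((m + 1 + 1 : ℕ) : ℤ) := by push_cast; ring
  have hexp' : (m : ℤ) + 2 - 1 = ((m + 1 : ℕ) : ℤ) := by push_cast; ring
  rw [baseDigit, hexp', hexp, zpow_natCast, zpow_natCast, ceil_mul_pow_succ_sub_one hq hz,
    ceil_mul_pow_succ_sub_one hq hz]
  apply mul_left_cancel₀ hd
  linear_combination hmul (m + 1) - q * hmul m - z * q ^ m * (pow_succ q m).symm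

theorem digit_eventually_constant_general (q : ℤ) (hq : 1 < q) (t : ℚ)
    (hint : ∃ z : ℤ, (q : ℚ) * (q - 1) * t = z) :
    ∃ c : ℤ, c ≠ 0 ∧ ∀ n : ℤ, 2 ≤ n →
      ⌈t * (q : ℚ) ^ n - 1⌉ - q * ⌈t * (q : ℚ) ^ (n - 1) - 1⌉ = c := by
  obtain ⟨z, hz⟩ := hint
  have hrem_nonneg : 0 ≤ (z - 1) % (q - 1) := Int.emod_nonneg _ (by omega)
  refine ⟨(z - 1) % (q - 1) + 1, by omega, fun n hn => ?_⟩
  obtain ⟨m, rfl⟩ : ∃ m : ℕ, n = m + 2 := ⟨(n - 2).toNat, by omega⟩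
  exact baseDigit_natCast_add_two hq hz m

/-- If `q > 1` and `t > 0` is a rational number with `q(q-1)t ∈ ℤ`, then the `n`-th digit of
`t` in base `q` is nonzero and constant for all `n ≥ 2`. -/
theorem digit_eventually_constant (q : ℤ) (hq : 1 < q) (t : ℚ) (ht : 0 < t)
    (hint : ∃ z : ℤ, (q : ℚ) * (q - 1) * t = z) :
    ∃ c : ℤ, c ≠ 0 ∧ ∀ n : ℤ, 2 ≤ n →
      ⌈t * (q : ℚ) ^ n - 1⌉ - q * ⌈t * (q : ℚ) ^ (n - 1) - 1⌉ = c :=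
  digit_eventually_constant_general q hq t hint
end

section
/- Let p ≥ 5 be a prime, k an algebraic closure of 𝔽_p, and a = (p-1)/2. Let G(x,y,z) = xy(x+y)(x+zy) ∈ k[x,y,z], and let H(z) ∈ k[z] be the coefficient of the monomial x^{p-1}y^{p-1} in G(x,y,z)^a, viewed as a polynomial in x,y over k[z]. Then H(0) = 1 and H is a non-constant monic polynomial in z, so there exists u ∈ k with u ≠ 0 and H(u) = 0. -/
/-!
Since `G^a = (xy)^a (x+y)^a (x+zy)^a` and `p - 1 = 2a`, the coefficient `H` of `x^{2a} y^{2a}`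
is the coefficient of `x^a y^a` in `(x+y)^a (x+zy)^a`, namely `H(z) = ∑ᵢ C(a,i)² zⁱ`.
Hence `H(0) = 1` and `H` is monic of degree `a ≥ 2`, so it has a root in the algebraically
closed field `k`, which is nonzero because `H(0) = 1`.
-/

open MvPolynomial Finset

namespace Finsupp

theorem single_add_single_inj {i j i' j' : ℕ} :
    single (0 : Fin 2) i + single 1 j = single 0 i' + single 1 j' ↔ i = i' ∧ j = j' := by
  refine ⟨fun h => ⟨?_, ?_⟩, by rintro ⟨rfl, rfl⟩; rfl⟩
  · simpa using DFunLike.congr_fun h 0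
  · simpa using DFunLike.congr_fun h 1

theorem single_add_single_add_single_add_single (i j i' j' : ℕ) :
    single (0 : Fin 2) i + single 1 j + (single 0 i' + single 1 j') =
      single 0 (i + i') + single 1 (j + j') := by
  rw [add_add_add_comm, single_add, single_add]

end Finsupp

namespace MvPolynomial

variable {R : Type*} [CommRing R]

theorem X_add_C_mul_X_pow (c : R) (n : ℕ) :
    (X 0 + C c * X 1 : MvPolynomial (Fin 2) R) ^ n =
      ∑ i ∈ range (n + 1),
        monomial (Finsupp.single 0 i + Finsupp.single 1 (n - i)) (c ^ (n - i) * n.choose i) := by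
  rw [add_pow]
  refine sum_congr rfl fun i _ => ?_
  rw [mul_pow, ← C_pow, X_pow_eq_monomial, X_pow_eq_monomial, ← Nat.cast_comm, ← map_natCast C,
    C_mul_monomial, monomial_mul, C_mul_monomial]
  congr 1
  ring

theorem coeff_mul_X_add_C_mul_X_pow (c d : R) (n : ℕ) :
    coeff (Finsupp.single 0 n + Finsupp.single 1 n)
        ((X 0 + C c * X 1 : MvPolynomial (Fin 2) R) ^ n * (X 0 + C d * X 1) ^ n) =
      ∑ i ∈ range (n + 1), (n.choose i ^ 2 : R) * c ^ (n - i) * d ^ i := by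
  simp only [X_add_C_mul_X_pow, sum_mul_sum, monomial_mul, coeff_sum, coeff_monomial,
    Finsupp.single_add_single_add_single_add_single, Finsupp.single_add_single_inj]
  refine sum_congr rfl fun i hi => ?_
  have hi : i ≤ n := Nat.lt_succ_iff.mp (mem_range.mp hi)
  rw [sum_eq_single_of_mem (n - i) (mem_range.mpr (by omega)), if_pos (by omega),
    Nat.sub_sub_self hi, Nat.choose_symm hi]
  · ring
  · exact fun j _ hji => if_neg (by omega)

end MvPolynomial

section QuarticForm

variable {R : Type*} [CommRing R]

noncomputable def quarticForm (z : R) : MvPolynomial (Fin 2) R :=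
  X 0 * X 1 * (X 0 + X 1) * (X 0 + C z * X 1)

theorem coeff_quarticForm_pow (z : R) (n : ℕ) :
    coeff (Finsupp.single 0 (2 * n) + Finsupp.single 1 (2 * n)) (quarticForm z ^ n) =
      ∑ i ∈ range (n + 1), (n.choose i ^ 2 : R) * z ^ i := by
  have hfactor : quarticForm z ^ n =
      monomial (Finsupp.single 0 n + Finsupp.single 1 n) 1 *
        ((X 0 + C 1 * X 1) ^ n * (X 0 + C z * X 1) ^ n) := by
    rw [C_1, one_mul, ← one_mul (1 : R), ← monomial_mul, ← X_pow_eq_monomial, ← X_pow_eq_monomial]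
    simp only [quarticForm, mul_pow]
    ring
  rw [hfactor, two_mul, ← Finsupp.single_add_single_add_single_add_single, coeff_monomial_mul,
    one_mul, coeff_mul_X_add_C_mul_X_pow]
  simp only [one_pow, mul_one]

end QuarticForm

namespace Polynomial

variable {K : Type*} [Semiring K] (c : ℕ → K) {n : ℕ}

theorem degree_sum_range_C_mul_X_pow_lt :
    (∑ i ∈ range n, C (c i) * X ^ i).degree < (n : WithBot ℕ) := by
  simpa only [Fin.sum_univ_eq_sum_range (fun i => C (c i) * X ^ i)] using
    degree_sum_fin_lt (fun i : Fin n => c i)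

theorem sum_range_succ_C_mul_X_pow_of_eq_one (hc : c n = 1) :
    ∑ i ∈ range (n + 1), C (c i) * X ^ i = X ^ n + ∑ i ∈ range n, C (c i) * X ^ i := by
  rw [sum_range_succ, hc, C_1, one_mul, add_comm]

theorem monic_sum_range_C_mul_X_pow (hc : c n = 1) :
    (∑ i ∈ range (n + 1), C (c i) * X ^ i).Monic := by
  rw [sum_range_succ_C_mul_X_pow_of_eq_one c hc]
  exact monic_X_pow_add (degree_sum_range_C_mul_X_pow_lt c)

theorem natDegree_sum_range_C_mul_X_pow [Nontrivial K] (hc : c n = 1) :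
    (∑ i ∈ range (n + 1), C (c i) * X ^ i).natDegree = n := by
  rw [sum_range_succ_C_mul_X_pow_of_eq_one c hc, natDegree_add_eq_left_of_degree_lt
    (by rw [degree_X_pow]; exact degree_sum_range_C_mul_X_pow_lt c), natDegree_X_pow]

theorem eval_zero_sum_range_C_mul_X_pow :
    (∑ i ∈ range (n + 1), C (c i) * X ^ i).eval 0 = c 0 := by
  simp [eval_finsetSum, sum_range_succ']

theorem exists_ne_zero_isRoot {k : Type*} [Field k] [IsAlgClosed k] {f : k[X]}
    (hf : 0 < f.natDegree) (h0 : f.eval 0 ≠ 0) : ∃ u, u ≠ 0 ∧ f.eval u = 0 := by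
  obtain ⟨u, hu⟩ := IsAlgClosed.exists_root f (natDegree_pos_iff_degree_pos.mp hf).ne'
  refine ⟨u, ?_, hu⟩
  rintro rfl
  exact h0 hu

end Polynomial

/-- For a prime `p ≥ 5`, `k = algebraic closure of 𝔽_p`, `a = (p-1)/2`,
`G(x,y,z) = xy(x+y)(x+zy)` and `H(z)` the coefficient of `x^{p-1}y^{p-1}` in `G^a`,
we have `H(0) = 1`, `H` is monic and non-constant, and `H` has a nonzero root `u ∈ k`. -/
theorem exists_root_of_coeff_poly (p : ℕ) [Fact p.Prime] (hp5 : 5 ≤ p) :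
    let k := AlgebraicClosure (ZMod p)
    let a : ℕ := (p - 1) / 2
    let x : MvPolynomial (Fin 2) (Polynomial k) := X 0
    let y : MvPolynomial (Fin 2) (Polynomial k) := X 1
    let G := x * y * (x + y) * (x + C Polynomial.X * y)
    let H : Polynomial k :=
      MvPolynomial.coeff (Finsupp.single 0 (p - 1) + Finsupp.single 1 (p - 1)) (G ^ a)
    Polynomial.eval 0 H = 1 ∧ H.Monic ∧ 0 < H.natDegree ∧
      ∃ u : k, u ≠ 0 ∧ Polynomial.eval u H = 0 := by
  intro k a x y G H
  have hp_sub_one : p - 1 = 2 * a := by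
    obtain ⟨m, hm⟩ := (Fact.out : p.Prime).odd_of_ne_two (by omega)
    omega
  set c : ℕ → k := fun i => (a.choose i : k) ^ 2
  have hH : H = ∑ i ∈ range (a + 1), Polynomial.C (c i) * Polynomial.X ^ i := by
    have hG : G = quarticForm Polynomial.X := rfl
    simp only [H, hG, hp_sub_one, coeff_quarticForm_pow, c, map_pow, Polynomial.C_eq_natCast]
  have hc : c a = 1 := by simp [c]
  have h0 : H.eval 0 = 1 := by
    rw [hH, Polynomial.eval_zero_sum_range_C_mul_X_pow]; simp [c]
  have hdeg : 0 < H.natDegree := by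
    rw [hH, Polynomial.natDegree_sum_range_C_mul_X_pow c hc]; omega
  exact ⟨h0, hH ▸ Polynomial.monic_sum_range_C_mul_X_pow c hc, hdeg,
    Polynomial.exists_ne_zero_isRoot hdeg (h0 ▸ one_ne_zero)⟩
end

section
/- Let p be a prime, k an F-finite field of characteristic p, A = k[x_1,...,x_d] a polynomial ring, 𝔪 = (x_1,...,x_d), and f ∈ 𝔪 a nonzero polynomial. For an integer e > 0 define ν_f(p^e) := sup{n ≥ 0 : f^n ∉ 𝔪^[p^e]}, where 𝔪^[p^e] = (x_1^{p^e},...,x_d^{p^e}). Then for all e, e' > 0, ν_f(p^{e+e'}) ≥ p^{e'}·ν_f(p^e), i.e., the sequence ν_f(p^e)/p^e is non-decreasing in e. -/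
/-!
Frobenius is the whole argument: the coefficient of `p^n • m` in `g ^ p^n` is the `p^n`-th
power of the coefficient of `m` in `g`, nonzero as `k` is reduced, so a monomial of `f^ν` with
all exponents below `p^e` yields a monomial of `f^(p^{e'} ν)` with all exponents below
`p^{e+e'}`. Finiteness of `ν_f(p^{e+e'})` comes from `f ∈ 𝔪 ⊆ √𝔪^[q]`.
-/

open MvPolynomial

namespace MvPolynomial

variable {σ R : Type*} [CommSemiring R]

lemma mem_span_X_pow_iff (q : ℕ) (g : MvPolynomial σ R) :
    g ∈ Ideal.span (Set.range fun i : σ => (X i : MvPolynomial σ R) ^ q) ↔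
      ∀ m ∈ g.support, ∃ i, q ≤ m i := by
  have hset : (Set.range fun i : σ => (X i : MvPolynomial σ R) ^ q) =
      (fun s => monomial s (1 : R)) '' Set.range fun i : σ => Finsupp.single i q := by
    rw [← Set.range_comp]
    simp [Function.comp_def, X_pow_eq_monomial]
  simp only [hset, mem_ideal_span_monomial_image, Set.exists_range_iff, Finsupp.single_le_iff]

lemma span_X_le_radical_span_X_pow (q : ℕ) :
    Ideal.span (Set.range (X : σ → MvPolynomial σ R)) ≤
      (Ideal.span (Set.range fun i : σ => (X i : MvPolynomial σ R) ^ q)).radical := by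
  rw [Ideal.span_le]
  rintro _ ⟨i, rfl⟩
  exact ⟨q, Ideal.subset_span ⟨i, rfl⟩⟩

lemma coeff_smul_pow_char_pow (p : ℕ) [ExpChar R p] (g : MvPolynomial σ R) (n : ℕ)
    (m : σ →₀ ℕ) : (g ^ p ^ n).coeff (p ^ n • m) = g.coeff m ^ p ^ n := by
  rw [← map_iterateFrobenius_expand, coeff_map,
    coeff_expand_smul _ (pow_ne_zero _ (expChar_pos R p).ne'), iterateFrobenius_def]

lemma pow_char_pow_notMem_span_X_pow (p : ℕ) [ExpChar R p] [IsReduced R] {q : ℕ}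
    {g : MvPolynomial σ R} (hg : g ∉ Ideal.span (Set.range fun i : σ => (X i) ^ q)) (n : ℕ) :
    g ^ p ^ n ∉ Ideal.span (Set.range fun i : σ => (X i) ^ (q * p ^ n)) := by
  rw [mem_span_X_pow_iff] at hg ⊢
  push Not at hg ⊢
  obtain ⟨m, hm, hlt⟩ := hg
  have hpn : 0 < p ^ n := pow_pos (expChar_pos R p) n
  refine ⟨p ^ n • m, ?_, fun i => ?_⟩
  · rw [mem_support_iff, coeff_smul_pow_char_pow]
    exact fun h => mem_support_iff.mp hm (IsNilpotent.eq_zero ⟨_, h⟩)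
  · simpa [mul_comm q] using Nat.mul_lt_mul_of_pos_left (hlt i) hpn

end MvPolynomial

lemma bddAbove_setOf_pow_notMem {R : Type*} [CommSemiring R] {J : Ideal R} {f : R}
    (hf : f ∈ J.radical) : BddAbove {n : ℕ | f ^ n ∉ J} := by
  obtain ⟨N, hN⟩ := hf
  refine ⟨N, fun n hn => ?_⟩
  by_contra! h
  exact hn (J.pow_mem_of_pow_mem hN h.le)

theorem nu_monotone_general (p : ℕ) [Fact p.Prime] (k : Type) [Field k] [CharP k p]
    (d : ℕ) (f : MvPolynomial (Fin d) k)
    (hfm : f ∈ Ideal.span (Set.range (X : Fin d → MvPolynomial (Fin d) k)))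
    (e e' : ℕ) :
    p ^ e' * sSup {n : ℕ |
        f ^ n ∉ Ideal.span (Set.range fun i : Fin d =>
          (X i : MvPolynomial (Fin d) k) ^ p ^ e)} ≤
      sSup {n : ℕ |
        f ^ n ∉ Ideal.span (Set.range fun i : Fin d =>
          (X i : MvPolynomial (Fin d) k) ^ p ^ (e + e'))} := by
  have hbdd (ε : ℕ) := bddAbove_setOf_pow_notMem (span_X_le_radical_span_X_pow (p ^ ε) hfm)
  set S := {n : ℕ | f ^ n ∉ Ideal.span (Set.range fun i : Fin d =>
    (X i : MvPolynomial (Fin d) k) ^ p ^ e)}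
  rcases S.eq_empty_or_nonempty with hS | hS
  · simp [hS]
  refine le_csSup (hbdd _) ?_
  rw [Set.mem_ofPred_eq, pow_add, pow_mul']
  exact pow_char_pow_notMem_span_X_pow p (Nat.sSup_mem hS (hbdd e)) e'

/-- For `ν_f(p^e) := max{n : f^n ∉ 𝔪^[p^e]}` in a polynomial ring over an F-finite field
of characteristic `p`, one has `ν_f(p^{e+e'}) ≥ p^{e'} ν_f(p^e)`, i.e. `ν_f(p^e)/p^e` is
non-decreasing in `e`. -/
theorem nu_monotone (p : ℕ) [Fact p.Prime] (k : Type) [Field k] [CharP k p]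
    (hFfin : RingHom.Finite (frobenius k p)) (d : ℕ) (f : MvPolynomial (Fin d) k)
    (hf0 : f ≠ 0)
    (hfm : f ∈ Ideal.span (Set.range (X : Fin d → MvPolynomial (Fin d) k)))
    (e e' : ℕ) (he : 0 < e) (he' : 0 < e') :
    p ^ e' * sSup {n : ℕ |
        f ^ n ∉ Ideal.span (Set.range fun i : Fin d =>
          (X i : MvPolynomial (Fin d) k) ^ p ^ e)} ≤
      sSup {n : ℕ |
        f ^ n ∉ Ideal.span (Set.range fun i : Fin d =>
          (X i : MvPolynomial (Fin d) k) ^ p ^ (e + e'))} :=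
  nu_monotone_general p k d f hfm e e'
end

section
/- Let k be an F-finite field of characteristic p > 0 and 𝒰 a non-principal ultrafilter on ℕ. Then the ultrapower k* = ulim_m k is an F-finite field; more precisely, for each e > 0 the relative Frobenius map F^e_*(k) ⊗_k k* → F^e_*(k*) is an isomorphism. -/
open Filter

def TwF (k : Type) : Type := k
def toTwF {k : Type} (x : k) : TwF k := x
def ofTwF {k : Type} (x : TwF k) : k := x

theorem iterFrob_finite (p : ℕ) [Fact p.Prime] (k : Type) [Field k] [CharP k p]
    (hFfin : RingHom.Finite (frobenius k p)) (e : ℕ) :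
    RingHom.Finite (iterateFrobenius k p e) := by
  induction e with
  | zero => rw [iterateFrobenius_zero]; exact RingHom.Finite.id k
  | succ n ih =>
      have : iterateFrobenius k p (n + 1) = (iterateFrobenius k p n).comp (frobenius k p) := by
        rw [← iterateFrobenius_one k p, ← iterateFrobenius_add]
      rw [this]
      exact RingHom.Finite.comp ih hFfin

theorem exists_good_family (p : ℕ) [Fact p.Prime] (k : Type) [Field k] [CharP k p]
    (hFfin : RingHom.Finite (frobenius k p)) (e : ℕ) :
    ∃ (n : ℕ) (B : Fin n → k),
      (∀ a : k, ∃ c : Fin n → k, a = ∑ i, c i ^ p ^ e * B i) ∧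
      (∀ c : Fin n → k, ∑ i, c i ^ p ^ e * B i = 0 → ∀ i, c i = 0) := by
  letI : Field (TwF k) := inferInstanceAs (Field k)
  letI : Algebra k (TwF k) := RingHom.toAlgebra (iterateFrobenius k p e)
  haveI hfin : Module.Finite k (TwF k) := iterFrob_finite p k hFfin e
  let B' := Module.finBasis k (TwF k)
  refine ⟨_, fun i => ofTwF (B' i), ?_, ?_⟩
  · intro a
    refine ⟨fun i => B'.equivFun (toTwF a) i, ?_⟩
    conv_lhs => rw [show a = ofTwF (toTwF a) from rfl, ← B'.sum_equivFun (toTwF a)]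
    rfl
  · intro c hc i
    have h0 : ∑ i, c i • B' i = 0 := hc
    exact Fintype.linearIndependent_iff.mp B'.linearIndependent c h0 i


theorem finite_of_span (R : Type) [CommRing R] (f : R →+* R) (n : ℕ) (b : Fin n → R)
    (h : ∀ w : R, ∃ z : Fin n → R, w = ∑ i, f (z i) * b i) : RingHom.Finite f := by
  letI : CommRing (TwF R) := inferInstanceAs (CommRing R)
  letI : Algebra R (TwF R) := RingHom.toAlgebra (f : R →+* TwF R)
  have hM : Module.Finite R (TwF R) := by
    constructor
    refine Submodule.fg_def.mpr ⟨Set.range (fun i => toTwF (b i)), Set.finite_range _, ?_⟩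
    rw [Submodule.eq_top_iff']
    intro w
    obtain ⟨z, hz⟩ := h (ofTwF w)
    have hw : w = ∑ i, z i • toTwF (b i) := hz
    rw [hw]
    exact Submodule.sum_mem _ fun i _ =>
      Submodule.smul_mem _ _ (Submodule.subset_span ⟨i, rfl⟩)
  exact hM

theorem germ_span (p : ℕ) (k : Type) [Field k] (𝒰 : Ultrafilter ℕ) (E N : ℕ) (B : Fin N → k)
    (hsp : ∀ a : k, ∃ c : Fin N → k, a = ∑ i, c i ^ p ^ E * B i)
    (w : Germ (𝒰 : Filter ℕ) k) :
    ∃ z : Fin N → Germ (𝒰 : Filter ℕ) k,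
      w = ∑ i, z i ^ p ^ E * Germ.const (B i) := by
  induction w using Germ.inductionOn with
  | _ g =>
    choose c hc using fun m => hsp (g m)
    refine ⟨fun i => (↑(fun m => c m i) : Germ (𝒰 : Filter ℕ) k), ?_⟩
    have key : ∀ i : Fin N, ((↑(fun m => c m i) : Germ (𝒰 : Filter ℕ) k)) ^ p ^ E
        * Germ.const (B i) = (↑(fun m => c m i ^ p ^ E * B i) : Germ (𝒰 : Filter ℕ) k) :=
      fun i => rfl
    simp only [key]
    rw [show (∑ i, (↑(fun m => c m i ^ p ^ E * B i) : Germ (𝒰 : Filter ℕ) k))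
        = (↑(∑ i, fun m => c m i ^ p ^ E * B i) : Germ (𝒰 : Filter ℕ) k) from
      (map_sum (Germ.coeRingHom _) _ Finset.univ).symm]
    refine Germ.coe_eq.mpr (Eventually.of_forall fun m => ?_)
    rw [Finset.sum_apply]
    exact hc m

/-- For an F-finite field `k` of characteristic `p` and a non-principal ultrafilter `𝒰`
on `ℕ`, the ultrapower `k* = ulim_m k` is an F-finite field; more precisely, for every
`e > 0` the relative Frobenius `F^e_*(k) ⊗_k k* → F^e_*(k*)`, `x ⊗ y ↦ x·y^{p^e}`,
is an isomorphism (here `F^e_*(k)` is `k` with `k`-action twisted by the `e`-th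
Frobenius). -/
theorem ultrapower_FFinite (p : ℕ) [Fact p.Prime] (k : Type) [Field k] [CharP k p]
    (hFfin : RingHom.Finite (frobenius k p)) (𝒰 : Ultrafilter ℕ)
    (h𝒰 : ∀ x : ℕ, (𝒰 : Filter ℕ) ≠ pure x) (e : ℕ) (he : 0 < e) :
    haveI : CharP (Germ (𝒰 : Filter ℕ) k) p :=
      charP_of_injective_ringHom
        (f := (Germ.coeRingHom (𝒰 : Filter ℕ)).comp (Pi.constRingHom ℕ k))
        (fun _ _ h => Germ.const_inj.mp h) p
    RingHom.Finite (frobenius (Germ (𝒰 : Filter ℕ) k) p) ∧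
    (letI MK : Module k (Germ (𝒰 : Filter ℕ) k) := inferInstance
     letI Mtw : Module k k := Module.compHom k (iterateFrobenius k p e)
     ∃ φ : (@TensorProduct k _ k (Germ (𝒰 : Filter ℕ) k) _ _ Mtw MK) ≃+
         Germ (𝒰 : Filter ℕ) k,
       ∀ (x : k) (y : Germ (𝒰 : Filter ℕ) k),
         φ (@TensorProduct.tmul k _ k (Germ (𝒰 : Filter ℕ) k) _ _ Mtw MK x y) =
           Germ.const x * y ^ (p ^ e)) := by
  haveI hCh : CharP (Germ (𝒰 : Filter ℕ) k) p :=
    charP_of_injective_ringHom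
      (f := (Germ.coeRingHom (𝒰 : Filter ℕ)).comp (Pi.constRingHom ℕ k))
      (fun _ _ h => Germ.const_inj.mp h) p
  constructor
  · -- F-finiteness of the ultrapower
    obtain ⟨n1, B1, hsp1, _⟩ := exists_good_family p k hFfin 1
    refine finite_of_span _ (frobenius (Germ (𝒰 : Filter ℕ) k) p) n1
      (fun i => Germ.const (B1 i)) fun w => ?_
    obtain ⟨z, hz⟩ := germ_span p k 𝒰 1 n1 B1 hsp1 w
    refine ⟨z, hz.trans (Finset.sum_congr rfl fun i _ => ?_)⟩
    rw [pow_one]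
    rfl
  · -- the explicit isomorphism
    letI MK : Module k (Germ (𝒰 : Filter ℕ) k) := inferInstance
    letI Mtw : Module k k := Module.compHom k (iterateFrobenius k p e)
    obtain ⟨n, B, hsp, hind⟩ := exists_good_family p k hFfin e
    have hsmulK : ∀ (r : k) (y : Germ (𝒰 : Filter ℕ) k), r • y = Germ.const r * y := by
      intro r y
      induction y using Germ.inductionOn with
      | _ g => rfl
    let f : k →+ Germ (𝒰 : Filter ℕ) k →+ Germ (𝒰 : Filter ℕ) k :=
      AddMonoidHom.mk'
        (fun x => AddMonoidHom.mk' (fun y => Germ.const x * y ^ p ^ e)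
          (fun y z => by
            show Germ.const x * (y + z) ^ p ^ e
              = Germ.const x * y ^ p ^ e + Germ.const x * z ^ p ^ e
            rw [add_pow_char_pow, mul_add]))
        (fun x x' => AddMonoidHom.ext fun y => by
          show (Germ.const x + Germ.const x') * y ^ p ^ e
            = Germ.const x * y ^ p ^ e + Germ.const x' * y ^ p ^ e
          rw [add_mul])
    let φ₀ : (@TensorProduct k _ k (Germ (𝒰 : Filter ℕ) k) _ _ Mtw MK) →+
        Germ (𝒰 : Filter ℕ) k :=
      @TensorProduct.liftAddHom k _ k (Germ (𝒰 : Filter ℕ) k) (Germ (𝒰 : Filter ℕ) k)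
        _ _ _ Mtw MK f
        (fun r x y => by
          induction y using Germ.inductionOn with
          | _ g =>
            show (Germ.const (r ^ p ^ e * x) * (↑g : Germ (𝒰 : Filter ℕ) k) ^ p ^ e)
              = Germ.const x * (r • (↑g : Germ (𝒰 : Filter ℕ) k)) ^ p ^ e
            show (↑(fun m => (r ^ p ^ e * x) * g m ^ p ^ e) : Germ (𝒰 : Filter ℕ) k)
              = ↑(fun m => x * (r * g m) ^ p ^ e)
            refine Germ.coe_eq.mpr (Eventually.of_forall fun m => ?_)
            show r ^ p ^ e * x * g m ^ p ^ e = x * (r * g m) ^ p ^ e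
            rw [mul_pow]
            ring)
    have hφ₀ : ∀ (x : k) (y : Germ (𝒰 : Filter ℕ) k),
        φ₀ (@TensorProduct.tmul k _ k (Germ (𝒰 : Filter ℕ) k) _ _ Mtw MK x y)
          = Germ.const x * y ^ p ^ e := fun x y => rfl
    -- moving twisted scalars across the tensor product
    have hswap : ∀ (r x : k) (w : Germ (𝒰 : Filter ℕ) k),
        @TensorProduct.tmul k _ k (Germ (𝒰 : Filter ℕ) k) _ _ Mtw MK (r ^ p ^ e * x) w
          = @TensorProduct.tmul k _ k (Germ (𝒰 : Filter ℕ) k) _ _ Mtw MK x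
              (Germ.const r * w) := by
      intro r x w
      have h1 : @TensorProduct.tmul k _ k (Germ (𝒰 : Filter ℕ) k) _ _ Mtw MK (r ^ p ^ e * x) w
          = @TensorProduct.tmul k _ k (Germ (𝒰 : Filter ℕ) k) _ _ Mtw MK x (r • w) :=
        Quotient.sound' <| AddConGen.Rel.of _ _ <| TensorProduct.Eqv.of_smul r x w
      rw [h1, hsmulK]
    -- every element of the twisted tensor product has the form `∑ i, B i ⊗ y i`
    have rep : ∀ t : @TensorProduct k _ k (Germ (𝒰 : Filter ℕ) k) _ _ Mtw MK,
        ∃ y : Fin n → Germ (𝒰 : Filter ℕ) k,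
          t = ∑ i, @TensorProduct.tmul k _ k (Germ (𝒰 : Filter ℕ) k) _ _ Mtw MK (B i) (y i) := by
      intro t
      induction t using TensorProduct.induction_on with
      | zero => exact ⟨0, by simp⟩
      | tmul x w =>
          obtain ⟨c, hc⟩ := hsp x
          refine ⟨fun i => Germ.const (c i) * w, ?_⟩
          rw [hc, TensorProduct.sum_tmul]
          exact Finset.sum_congr rfl fun i _ => hswap (c i) (B i) w
      | add t₁ t₂ h₁ h₂ =>
          obtain ⟨y₁, hy₁⟩ := h₁
          obtain ⟨y₂, hy₂⟩ := h₂
          refine ⟨y₁ + y₂, ?_⟩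
          rw [hy₁, hy₂, ← Finset.sum_add_distrib]
          exact Finset.sum_congr rfl fun i _ => by
            rw [Pi.add_apply, TensorProduct.tmul_add]
    have hinj : Function.Injective φ₀ := by
      refine (injective_iff_map_eq_zero φ₀).mpr fun t ht => ?_
      obtain ⟨y, rfl⟩ := rep t
      rw [map_sum] at ht
      simp only [hφ₀] at ht
      have hyg : ∀ i, ∃ g : ℕ → k, y i = ↑g := fun i => (y i).inductionOn fun g => ⟨g, rfl⟩
      choose g hg using hyg
      have key : ∀ i : Fin n, Germ.const (B i) * ((↑(g i) : Germ (𝒰 : Filter ℕ) k)) ^ p ^ e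
          = (↑(fun m => B i * g i m ^ p ^ e) : Germ (𝒰 : Filter ℕ) k) := fun i => rfl
      have hsum : (↑(∑ i, fun m => B i * g i m ^ p ^ e) : Germ (𝒰 : Filter ℕ) k)
          = ∑ i, (↑(fun m => B i * g i m ^ p ^ e) : Germ (𝒰 : Filter ℕ) k) :=
        map_sum (Germ.coeRingHom _) _ Finset.univ
      have ht' : (↑(∑ i, fun m => B i * g i m ^ p ^ e) : Germ (𝒰 : Filter ℕ) k) = 0 := by
        rw [hsum, ← ht]
        exact Finset.sum_congr rfl fun i _ => by rw [hg i]; exact (key i).symm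
      have hev : ∀ᶠ m in (𝒰 : Filter ℕ),
          (∑ i, fun m => B i * g i m ^ p ^ e) m = (0 : k) :=
        Germ.coe_eq.mp (ht'.trans (Germ.coe_zero (l := (𝒰 : Filter ℕ))).symm)
      have hz : ∀ i, y i = 0 := by
        intro i
        rw [hg i]
        refine (Germ.coe_eq.mpr ?_).trans (Germ.coe_zero (l := (𝒰 : Filter ℕ)))
        filter_upwards [hev] with m hm
        have hm' : ∑ j, g j m ^ p ^ e * B j = 0 := by
          rw [← hm, Finset.sum_apply]
          exact Finset.sum_congr rfl fun j _ => by
            show g j m ^ p ^ e * B j = B j * g j m ^ p ^ e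
            exact mul_comm _ _
        exact hind (fun j => g j m) hm' i
      simp only [hz]
      simp
    have hsurj : Function.Surjective φ₀ := by
      intro w
      obtain ⟨z, hz⟩ := germ_span p k 𝒰 e n B hsp w
      refine ⟨∑ i, @TensorProduct.tmul k _ k (Germ (𝒰 : Filter ℕ) k) _ _ Mtw MK (B i) (z i), ?_⟩
      rw [map_sum, hz]
      exact Finset.sum_congr rfl fun i _ => by rw [hφ₀, mul_comm]
    exact ⟨AddEquiv.ofBijective φ₀ ⟨hinj, hsurj⟩, fun x y => hφ₀ x y⟩
end
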